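/- arXiv:2405.05948 — 6 statements merged into one kernel-verified Lean document; each statement's English description precedes it below -/
import Mathlib

section
/- Let F(x) = cos(√x) on [0,∞). Then the Cesàro average (1/r)∫₀^r cos(√x) dx tends to 0 as r → ∞, but for every r > 0, sup_{a ≥ 0} (1/r)∫_a^{a+r} cos(√x) dx = 1 and inf_{a ≥ 0} (1/r)∫_a^{a+r} cos(√x) dx = -1. Hence the averages over intervals of length r do not converge uniformly in the left endpoint. -/
/-!
The substitution `x = t²` gives the antiderivative `2 (√x sin √x + cos √x)` of `cos √x`, so
`∫₀^r cos √x = O(√r)` and the Cesàro means tend to `0`. On the other hand `√` flattens out at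
infinity: on `[a, a + r]` the function `cos √x` stays within `r / (2√a)` of `cos √a`, so the average
over `[a, a + r]` is `cos √a + o(1)` as `a → ∞`. Taking `√a ∈ 2πℕ` (resp. `π + 2πℕ`) gives averages
arbitrarily close to `1` (resp. `-1`) for every fixed `r`, which rules out uniform convergence.
-/

open Real Filter MeasureTheory Set Topology

lemma abs_average_sub_le {f : ℝ → ℝ} {a r c δ : ℝ} (hr : 0 < r)
    (hf : IntervalIntegrable f volume a (a + r)) (h : ∀ x ∈ Ioc a (a + r), |f x - c| ≤ δ) :
    |(1 / r) * (∫ x in a..a + r, f x) - c| ≤ δ := by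
  have hbound : ∀ x ∈ uIoc a (a + r), ‖f x - c‖ ≤ δ := fun x hx =>
    h x (by rwa [uIoc_of_le (by linarith)] at hx)
  have hint := intervalIntegral.norm_integral_le_of_norm_le_const hbound
  rw [add_sub_cancel_left, abs_of_pos hr, Real.norm_eq_abs] at hint
  rw [intervalIntegral.integral_sub hf intervalIntegrable_const,
    intervalIntegral.integral_const, add_sub_cancel_left, smul_eq_mul] at hint
  rw [show (1 / r) * (∫ x in a..a + r, f x) - c = (1 / r) * ((∫ x in a..a + r, f x) - r * c) by
    field_simp, abs_mul, abs_of_pos (by positivity)]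
  calc 1 / r * |(∫ x in a..a + r, f x) - r * c| ≤ 1 / r * (δ * r) := by gcongr
    _ = δ := by field_simp

lemma sqrt_le_sqrt_add_div {a x : ℝ} (ha : 0 < a) (hx : 0 ≤ x) :
    √x ≤ √a + (x - a) / (2 * √a) := by
  have hsa : 0 < √a := sqrt_pos.2 ha
  rw [show √a + (x - a) / (2 * √a) = (a + x) / (2 * √a) by
    field_simp; rw [sq_sqrt ha.le]; ring, le_div_iff₀ (by positivity)]
  nlinarith [sq_nonneg (√a - √x), sq_sqrt ha.le, sq_sqrt hx]

lemma continuous_cos_sqrt : Continuous fun x : ℝ => cos √x := by fun_prop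

lemma integral_cos_sqrt {r : ℝ} (hr : 0 ≤ r) :
    ∫ x in (0 : ℝ)..r, cos √x = 2 * (√r * sin √r + cos √r) - 2 := by
  have hderiv : ∀ x ∈ Ioo 0 r,
      HasDerivAt (fun x => 2 * (√x * sin √x + cos √x)) (cos √x) x := by
    intro x hx
    have hs := hasDerivAt_sqrt hx.1.ne'
    refine (((hs.fun_mul hs.sin).fun_add hs.cos).const_mul 2).congr_deriv ?_
    field_simp [(sqrt_pos.2 hx.1).ne']
    ring
  rw [intervalIntegral.integral_eq_sub_of_hasDerivAt_of_le hr (by fun_prop) hderiv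
    (continuous_cos_sqrt.intervalIntegrable _ _)]
  simp

lemma abs_average_cos_sqrt_sub_le {a r : ℝ} (ha : 0 < a) (hr : 0 < r) :
    |(1 / r) * (∫ x in a..a + r, cos √x) - cos √a| ≤ r / (2 * √a) := by
  refine abs_average_sub_le hr (continuous_cos_sqrt.intervalIntegrable _ _) fun x hx => ?_
  have hsa : √a ≤ √x := sqrt_le_sqrt hx.1.le
  calc |cos √x - cos √a| ≤ |√x - √a| := abs_cos_sub_cos_le _ _
    _ = √x - √a := abs_of_nonneg (sub_nonneg.2 hsa)
    _ ≤ (x - a) / (2 * √a) := by linarith [sqrt_le_sqrt_add_div ha (ha.trans hx.1).le]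
    _ ≤ r / (2 * √a) := by gcongr; linarith [hx.2]

lemma abs_average_cos_sqrt_le_one (a : ℝ) {r : ℝ} (hr : 0 < r) :
    |(1 / r) * ∫ x in a..a + r, cos √x| ≤ 1 := by
  simpa using abs_average_sub_le (c := 0) hr (continuous_cos_sqrt.intervalIntegrable _ _)
    fun x _ => by simpa using abs_cos_le_one √x

lemma tendsto_average_cos_sqrt_sub {r : ℝ} (hr : 0 < r) :
    Tendsto (fun a => (1 / r) * (∫ x in a..a + r, cos √x) - cos √a) atTop (𝓝 0) := by
  refine squeeze_zero_norm' ?_ <|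
    (tendsto_const_nhds (x := r)).div_atTop (tendsto_sqrt_atTop.const_mul_atTop two_pos)
  filter_upwards [eventually_gt_atTop 0] with a ha
  exact abs_average_cos_sqrt_sub_le ha hr

lemma cos_mem_closure_averages {r t : ℝ} (hr : 0 < r) (ht : 0 ≤ t) :
    cos t ∈ closure {y | ∃ a : ℝ, 0 ≤ a ∧ y = (1 / r) * ∫ x in a..a + r, cos √x} := by
  set s : ℕ → ℝ := fun k => t + k * (2 * π)
  have hs : Tendsto s atTop atTop :=
    tendsto_atTop_add_const_left _ t
      (tendsto_natCast_atTop_atTop.atTop_mul_const (by positivity))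
  have hcos : ∀ k, cos √(s k ^ 2) = cos t := fun k => by
    rw [sqrt_sq (by positivity), cos_add_nat_mul_two_pi]
  have hlim := (tendsto_average_cos_sqrt_sub hr).comp ((tendsto_pow_atTop two_ne_zero).comp hs)
  refine mem_closure_of_tendsto (b := atTop)
    (f := fun k => (1 / r) * ∫ x in s k ^ 2..s k ^ 2 + r, cos √x) ?_
    (Eventually.of_forall fun k => ⟨_, sq_nonneg _, rfl⟩)
  simpa [Function.comp_def, hcos] using hlim.add_const (cos t)

lemma isLUB_averages_cos_sqrt {r : ℝ} (hr : 0 < r) :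
    IsLUB {y | ∃ a : ℝ, 0 ≤ a ∧ y = (1 / r) * ∫ x in a..a + r, cos √x} 1 := by
  refine isLUB_of_mem_closure ?_ (by simpa using cos_mem_closure_averages hr le_rfl)
  rintro _ ⟨a, -, rfl⟩
  exact (abs_le.1 (abs_average_cos_sqrt_le_one a hr)).2

lemma isGLB_averages_cos_sqrt {r : ℝ} (hr : 0 < r) :
    IsGLB {y | ∃ a : ℝ, 0 ≤ a ∧ y = (1 / r) * ∫ x in a..a + r, cos √x} (-1) := by
  refine isGLB_of_mem_closure ?_ (by simpa using cos_mem_closure_averages hr pi_pos.le)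
  rintro _ ⟨a, -, rfl⟩
  exact (abs_le.1 (abs_average_cos_sqrt_le_one a hr)).1

lemma abs_integral_cos_sqrt_le {r : ℝ} (hr : 0 ≤ r) :
    |∫ x in (0 : ℝ)..r, cos √x| ≤ 2 * √r + 4 := by
  rw [integral_cos_sqrt hr]
  have hsin : |√r * sin √r| ≤ √r := by
    rw [abs_mul, abs_of_nonneg (sqrt_nonneg r)]
    exact mul_le_of_le_one_right (sqrt_nonneg r) (abs_sin_le_one _)
  have hcos := abs_cos_le_one √r
  rw [abs_le] at hsin hcos ⊢
  constructor <;> linarith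

lemma tendsto_average_cos_sqrt_zero :
    Tendsto (fun r => (1 / r) * ∫ x in (0 : ℝ)..r, cos √x) atTop (𝓝 0) := by
  have hlim : Tendsto (fun r => 2 / √r + 4 / r) atTop (𝓝 0) := by
    simpa using (tendsto_const_nhds.div_atTop tendsto_sqrt_atTop).add
      (tendsto_const_nhds.div_atTop tendsto_id)
  refine squeeze_zero_norm' ?_ hlim
  filter_upwards [eventually_gt_atTop 0] with r hr
  rw [norm_mul, norm_div, norm_one, norm_of_nonneg hr.le, Real.norm_eq_abs]
  calc 1 / r * |∫ x in (0 : ℝ)..r, cos √x| ≤ 1 / r * (2 * √r + 4) := by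
        gcongr; exact abs_integral_cos_sqrt_le hr.le
    _ = 2 / √r + 4 / r := by
        field_simp
        linear_combination 2 * mul_self_sqrt hr.le

/-- `F(x) = cos √x` has Cesàro average 0 over `[0,r]` as `r → ∞`,
but the sup (resp. inf) over left endpoints `a ≥ 0` of the averages over `[a, a+r]`
is `1` (resp. `-1`) for every `r > 0`; hence the interval averages do not converge
uniformly in the left endpoint. -/
theorem stmt_0 :
    Tendsto (fun r : ℝ => (1 / r) * ∫ x in (0:ℝ)..r, Real.cos (Real.sqrt x))
      atTop (nhds 0) ∧
    (∀ r : ℝ, 0 < r →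
      IsLUB {y : ℝ | ∃ a : ℝ, 0 ≤ a ∧
        y = (1 / r) * ∫ x in a..(a + r), Real.cos (Real.sqrt x)} 1 ∧
      IsGLB {y : ℝ | ∃ a : ℝ, 0 ≤ a ∧
        y = (1 / r) * ∫ x in a..(a + r), Real.cos (Real.sqrt x)} (-1)) ∧
    ¬ ∀ ε : ℝ, 0 < ε → ∃ R : ℝ, 0 < R ∧ ∀ r : ℝ, R ≤ r → ∀ a : ℝ, 0 ≤ a →
        |(1 / r) * ∫ x in a..(a + r), Real.cos (Real.sqrt x)| ≤ ε := by
  refine ⟨tendsto_average_cos_sqrt_zero,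
    fun r hr => ⟨isLUB_averages_cos_sqrt hr, isGLB_averages_cos_sqrt hr⟩, ?_⟩
  intro huniform
  obtain ⟨R, hR, hsmall⟩ := huniform (1 / 2) one_half_pos
  have hbound : 1 / 2 ∈ upperBounds
      {y | ∃ a : ℝ, 0 ≤ a ∧ y = (1 / R) * ∫ x in a..a + R, cos √x} := by
    rintro _ ⟨a, ha, rfl⟩
    exact (abs_le.1 (hsmall R le_rfl a ha)).2
  exact absurd ((isLUB_averages_cos_sqrt hR).2 hbound) (by norm_num)
end

section
/- Let μ, ν be two locally finite infinite Borel measures on ℝ₊ with ν absolutely continuous w.r.t. μ and with Radon–Nikodym derivative dν/dμ(x) → c ≠ 0 as x → +∞. Then a function F ∈ L^∞ has uniform infinite-volume average w.r.t. ν if and only if it has one w.r.t. μ, and in that case the two averages coincide. -/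
open Real Filter MeasureTheory ENNReal

def HasUnifAvg (μ : Measure ℝ) (F : ℝ → ℝ) (A : ℝ) : Prop :=
  ∀ ε : ℝ, 0 < ε → ∃ R : ℝ, 0 < R ∧ ∀ a b : ℝ, 0 ≤ a → a ≤ b →
    R ≤ (μ (Set.Icc a b)).toReal →
    |((μ (Set.Icc a b)).toReal)⁻¹ * ∫ x in Set.Icc a b, F x ∂μ - A| ≤ ε

/-!
Write `ν = ρ μ`. Cutting an interval `V ⊆ ℝ₊` at a point beyond which `ρ` is `δ`-close to `c`
gives `|∫_V G dν - c ∫_V G dμ| ≤ δ μ(V) + B_δ` for every bounded `G`. For `G = 1` and `G = F`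
this says that `ν(V) - c μ(V)` and `∫_V F dν - c ∫_V F dμ` are `o(μ(V))`. Hence `ν(V) → ∞`
exactly when `μ(V) → ∞`, so both averages are limits along one and the same filter of intervals,
along which `ν(V)⁻¹ ∫_V F dν = (c μ(V)⁻¹ ∫_V F dμ + o(1)) / (c + o(1))`.
-/

open Set Topology Asymptotics

section Asymptotics

variable {ι : Type*} {l : Filter ι}

theorem tendsto_atTop_of_le_mul_add {f g : ι → ℝ} {K B : ℝ} (hK : 0 < K)
    (hf : Tendsto f l atTop) (hfg : ∀ᶠ i in l, f i ≤ K * g i + B) : Tendsto g l atTop := by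
  refine tendsto_atTop_mono' l (hfg.mono fun i hi => ?_)
    ((tendsto_atTop_add_const_right l (-B) hf).atTop_div_const hK)
  rw [div_le_iff₀' hK]; linarith

theorem isLittleO_of_forall_abs_le_mul_add {f g : ι → ℝ} (hf : Tendsto f l atTop)
    (h : ∀ δ > 0, ∃ B, ∀ᶠ i in l, |g i| ≤ δ * f i + B) : g =o[l] f := by
  refine IsLittleO.of_bound fun δ hδ => ?_
  obtain ⟨B, hB⟩ := h (δ / 2) (half_pos hδ)
  filter_upwards [hB, hf.eventually_ge_atTop 0, hf.eventually_ge_atTop (2 * B / δ)]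
    with i hgi hfi hBi
  rw [div_le_iff₀ hδ] at hBi
  rw [Real.norm_eq_abs, Real.norm_eq_abs, abs_of_nonneg hfi]
  linarith

theorem tendsto_inv_mul_iff_of_isLittleO {m n I J : ι → ℝ} {c A : ℝ} (hc : c ≠ 0)
    (hm : ∀ᶠ i in l, m i ≠ 0) (hn : (fun i => n i - c * m i) =o[l] m)
    (hJ : (fun i => J i - c * I i) =o[l] m) :
    Tendsto (fun i => (m i)⁻¹ * I i) l (𝓝 A) ↔ Tendsto (fun i => (n i)⁻¹ * J i) l (𝓝 A) := by
  have hnm : Tendsto (fun i => n i / m i) l (𝓝 c) := by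
    refine (hn.tendsto_div_nhds_zero.add_const c).congr' (hm.mono fun i hi => ?_) |>.trans_eq ?_
    · field_simp; ring
    · simp
  have hn0 : ∀ᶠ i in l, n i ≠ 0 :=
    (hnm.eventually_ne hc).mono fun i hi h => hi (by simp [h])
  have hJm := hJ.tendsto_div_nhds_zero
  constructor
  · intro hI
    refine ((hI.const_mul c).add hJm |>.div hnm hc).congr' ?_ |>.trans_eq ?_
    · filter_upwards [hm, hn0] with i hmi hni
      simp only [Pi.div_apply]
      field_simp
      ring
    · rw [add_zero, mul_div_cancel_left₀ A hc]
  · intro hJn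
    refine ((hJn.mul hnm).sub hJm |>.div_const c).congr' ?_ |>.trans_eq ?_
    · filter_upwards [hm, hn0] with i hmi hni
      field_simp; ring
    · rw [sub_zero, mul_div_cancel_right₀ A hc]

end Asymptotics

section WithDensity

variable {X : Type*} [MeasurableSpace X] {μ : Measure X} {ρ : X → ℝ≥0∞} {G : X → ℝ}
  {s K : Set X} {C c δ : ℝ}

theorem abs_setIntegral_withDensity_sub_le (hρ : Measurable ρ) (hs : MeasurableSet s)
    (hμs : μ s ≠ ∞) (hνs : μ.withDensity ρ s ≠ ∞) (hG : AEStronglyMeasurable G μ)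
    (hGC : ∀ x, |G x| ≤ C) (hρs : ∀ x ∈ s, |(ρ x).toReal - c| ≤ δ) :
    |∫ x in s, G x ∂μ.withDensity ρ - c * ∫ x in s, G x ∂μ| ≤ C * δ * μ.real s := by
  have hρ_lt_top : ∀ᵐ x ∂μ.restrict s, ρ x < ∞ :=
    ae_lt_top hρ (by rwa [← withDensity_apply ρ hs])
  have hbound : ∀ x ∈ s, ‖((ρ x).toReal - c) * G x‖ ≤ C * δ := fun x hx => by
    rw [norm_mul, Real.norm_eq_abs, Real.norm_eq_abs, mul_comm C]
    exact mul_le_mul (hρs x hx) (hGC x) (abs_nonneg _) ((abs_nonneg _).trans (hρs x hx))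
  have hGi : IntegrableOn G s μ :=
    Measure.integrableOn_of_bounded hμs hG
      (ae_of_all _ fun x => (Real.norm_eq_abs _).trans_le (hGC x))
  have hdiff : IntegrableOn (fun x => ((ρ x).toReal - c) * G x) s μ :=
    Measure.integrableOn_of_bounded hμs
      ((hρ.ennreal_toReal.sub_const c).aestronglyMeasurable.mul hG)
      ((ae_restrict_iff' hs).2 (ae_of_all _ hbound))
  calc |∫ x in s, G x ∂μ.withDensity ρ - c * ∫ x in s, G x ∂μ|
      = ‖∫ x in s, ((ρ x).toReal - c) * G x ∂μ‖ := by
        rw [setIntegral_withDensity_eq_setIntegral_toReal_smul hρ hρ_lt_top G hs,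
          ← integral_const_mul, ← integral_sub _ (hGi.const_mul c), Real.norm_eq_abs]
        · simp only [smul_eq_mul, sub_mul]
        · refine (hdiff.add (hGi.const_mul c)).congr (ae_of_all _ fun x => ?_)
          simp only [Pi.add_apply, smul_eq_mul]; ring
    _ ≤ C * δ * μ.real s := norm_setIntegral_le_of_norm_le_const (lt_top_iff_ne_top.2 hμs) hbound

theorem abs_setIntegral_withDensity_sub_le_add (hρ : Measurable ρ) (hs : MeasurableSet s)
    (hK : MeasurableSet K) (hμs : μ s ≠ ∞) (hνs : μ.withDensity ρ s ≠ ∞)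
    (hG : AEStronglyMeasurable G μ) (hGC : ∀ x, |G x| ≤ C)
    (hρs : ∀ x ∈ s \ K, |(ρ x).toReal - c| ≤ δ) :
    |∫ x in s, G x ∂μ.withDensity ρ - c * ∫ x in s, G x ∂μ|
      ≤ C * δ * μ.real (s \ K) + C * ((μ.withDensity ρ).real (s ∩ K) + |c| * μ.real (s ∩ K)) := by
  set ν := μ.withDensity ρ
  have hGν : AEStronglyMeasurable G ν := hG.mono_ac (withDensity_absolutelyContinuous μ ρ)
  have hGC' : ∀ x, ‖G x‖ ≤ C := fun x => (Real.norm_eq_abs _).trans_le (hGC x)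
  have head : ∀ {κ : Measure X}, κ s ≠ ∞ → |∫ x in s ∩ K, G x ∂κ| ≤ C * κ.real (s ∩ K) :=
    fun hκs => norm_setIntegral_le_of_norm_le_const
      ((measure_mono inter_subset_left).trans_lt hκs.lt_top) fun x _ => hGC' x
  have tail := abs_setIntegral_withDensity_sub_le hρ (hs.diff hK)
    (measure_ne_top_of_subset sdiff_subset hμs) (measure_ne_top_of_subset sdiff_subset hνs) hG
    hGC hρs
  rw [← integral_inter_add_sdiff hK
      (Measure.integrableOn_of_bounded hμs hG (ae_of_all _ hGC')),
    ← integral_inter_add_sdiff hK (Measure.integrableOn_of_bounded hνs hGν (ae_of_all _ hGC'))]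
  calc _ = |∫ x in s ∩ K, G x ∂ν - c * ∫ x in s ∩ K, G x ∂μ
          + (∫ x in s \ K, G x ∂ν - c * ∫ x in s \ K, G x ∂μ)| := by ring_nf
    _ ≤ |∫ x in s ∩ K, G x ∂ν| + |c| * |∫ x in s ∩ K, G x ∂μ|
          + |∫ x in s \ K, G x ∂ν - c * ∫ x in s \ K, G x ∂μ| := by
        grw [abs_add_le, abs_sub, abs_mul]
    _ ≤ C * ν.real (s ∩ K) + |c| * (C * μ.real (s ∩ K)) + C * δ * μ.real (s \ K) := by
        grw [head hνs, head hμs, tail]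
    _ = _ := by ring

end WithDensity

theorem exists_abs_setIntegral_withDensity_Icc_sub_le {μ : Measure ℝ} {ρ : ℝ → ℝ≥0∞} {G : ℝ → ℝ}
    {C c δ : ℝ} (hρ : Measurable ρ) (hμ : ∀ a b, μ (Icc a b) < ∞)
    (hν : ∀ a b, μ.withDensity ρ (Icc a b) < ∞) (hlim : Tendsto (fun x => (ρ x).toReal) atTop (𝓝 c))
    (hG : AEStronglyMeasurable G μ) (hGC : ∀ x, |G x| ≤ C) (hδ : 0 < δ) :
    ∃ B, ∀ a b, 0 ≤ a → |∫ x in Icc a b, G x ∂μ.withDensity ρ - c * ∫ x in Icc a b, G x ∂μ|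
      ≤ δ * μ.real (Icc a b) + B := by
  set ν := μ.withDensity ρ
  have hC : 0 ≤ C := (abs_nonneg _).trans (hGC 0)
  obtain ⟨x₀, hx₀⟩ := eventually_atTop.1 <|
    hlim.eventually (Metric.closedBall_mem_nhds c (div_pos hδ (by linarith : 0 < C + 1)))
  refine ⟨C * (ν.real (Icc 0 x₀) + |c| * μ.real (Icc 0 x₀)), fun a b ha => ?_⟩
  have hρ_close : ∀ x ∈ Icc a b \ Icc 0 x₀, |(ρ x).toReal - c| ≤ δ / (C + 1) := fun x hx => by
    have hx₀x : x₀ ≤ x := le_of_not_ge fun h => hx.2 ⟨ha.trans hx.1.1, h⟩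
    simpa only [Metric.mem_closedBall, Real.dist_eq] using hx₀ x hx₀x
  have hCδ : C * (δ / (C + 1)) ≤ δ := by
    rw [mul_div_assoc', div_le_iff₀ (by linarith)]; nlinarith
  refine (abs_setIntegral_withDensity_sub_le_add hρ measurableSet_Icc measurableSet_Icc
    (hμ a b).ne (hν a b).ne hG hGC hρ_close).trans ?_
  grw [hCδ, measureReal_mono sdiff_subset (hμ a b).ne,
    measureReal_mono inter_subset_right (hν 0 x₀).ne,
    measureReal_mono inter_subset_right (hμ 0 x₀).ne]

def largeIntervals (μ : Measure ℝ) : Filter (ℝ × ℝ) :=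
  comap (fun p => μ.real (Icc p.1 p.2)) atTop ⊓ 𝓟 {p | 0 ≤ p.1 ∧ p.1 ≤ p.2}

section LargeIntervals

variable {μ ν : Measure ℝ}

theorem hasBasis_largeIntervals (μ : Measure ℝ) :
    (largeIntervals μ).HasBasis (fun _ : ℝ => True)
      fun R => {p | R ≤ μ.real (Icc p.1 p.2)} ∩ {p | 0 ≤ p.1 ∧ p.1 ≤ p.2} :=
  (atTop_basis.comap _).inf_principal _

theorem hasUnifAvg_iff_tendsto {F : ℝ → ℝ} {A : ℝ} :
    HasUnifAvg μ F A ↔ Tendsto (fun p : ℝ × ℝ => (μ.real (Icc p.1 p.2))⁻¹ *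
      ∫ x in Icc p.1 p.2, F x ∂μ) (largeIntervals μ) (𝓝 A) := by
  rw [(hasBasis_largeIntervals μ).tendsto_iff Metric.nhds_basis_closedBall]
  refine forall₂_congr fun ε _ => ⟨fun ⟨R, _, hR⟩ => ⟨R, trivial, ?_⟩, fun ⟨R, _, hR⟩ => ?_⟩
  · rintro ⟨a, b⟩ ⟨hRab, ha, hab⟩
    exact hR a b ha hab hRab
  · refine ⟨max R 1, by positivity, fun a b ha hab hRab => ?_⟩
    exact hR (a, b) ⟨(le_max_left R 1).trans hRab, ha, hab⟩

theorem tendsto_measureReal_largeIntervals (μ : Measure ℝ) :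
    Tendsto (fun p => μ.real (Icc p.1 p.2)) (largeIntervals μ) atTop :=
  tendsto_comap.mono_left inf_le_left

theorem eventually_largeIntervals {P : ℝ × ℝ → Prop} (h : ∀ a b, 0 ≤ a → P (a, b)) :
    ∀ᶠ p in largeIntervals μ, P p :=
  mem_inf_of_right <| mem_principal.2 fun p hp => h p.1 p.2 hp.1

theorem largeIntervals_le_of_tendsto
    (h : Tendsto (fun p => ν.real (Icc p.1 p.2)) (largeIntervals μ) atTop) :
    largeIntervals μ ≤ largeIntervals ν :=
  le_inf (tendsto_iff_comap.1 h) inf_le_right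

theorem largeIntervals_eq_of_abs_sub_le {c B : ℝ} (hc : 0 < c)
    (h : ∀ a b, 0 ≤ a → |ν.real (Icc a b) - c * μ.real (Icc a b)| ≤ c / 2 * μ.real (Icc a b) + B) :
    largeIntervals ν = largeIntervals μ := by
  refine le_antisymm (largeIntervals_le_of_tendsto ?_) (largeIntervals_le_of_tendsto ?_)
  · refine tendsto_atTop_of_le_mul_add (K := 3 * c / 2) (B := B) (by positivity)
      (tendsto_measureReal_largeIntervals ν) (eventually_largeIntervals fun a b ha => ?_)
    linarith [(abs_le.1 (h a b ha)).2]
  · refine tendsto_atTop_of_le_mul_add (K := 2 / c) (B := 2 * B / c) (by positivity)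
      (tendsto_measureReal_largeIntervals μ) (eventually_largeIntervals fun a b ha => ?_)
    rw [div_mul_eq_mul_div, ← add_div, le_div_iff₀ hc]
    linarith [(abs_le.1 (h a b ha)).1]

end LargeIntervals

theorem stmt_2_general (μ ν : Measure ℝ) (ρ : ℝ → ℝ≥0∞) (hρ : Measurable ρ)
    (hν : ν = μ.withDensity ρ)
    (hμloc : ∀ a b : ℝ, μ (Set.Icc a b) < ⊤)
    (hνloc : ∀ a b : ℝ, ν (Set.Icc a b) < ⊤)
    (c : ℝ) (hc : c ≠ 0)
    (hlim : Tendsto (fun x => (ρ x).toReal) atTop (nhds c))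
    (F : ℝ → ℝ) (hFm : Measurable F) (hFb : ∃ C : ℝ, ∀ x : ℝ, |F x| ≤ C) :
    ∀ A : ℝ, (HasUnifAvg ν F A ↔ HasUnifAvg μ F A) := by
  subst hν
  intro A
  have hc₀ : 0 < c := (ge_of_tendsto' hlim fun _ => toReal_nonneg).lt_of_ne' hc
  obtain ⟨C, hC⟩ := hFb
  have hmeasure : ∀ δ > 0, ∃ B, ∀ a b, 0 ≤ a →
      |(μ.withDensity ρ).real (Icc a b) - c * μ.real (Icc a b)| ≤ δ * μ.real (Icc a b) + B :=
    fun δ hδ => by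
      simpa only [setIntegral_const, smul_eq_mul, mul_one] using
        exists_abs_setIntegral_withDensity_Icc_sub_le hρ hμloc hνloc hlim
          aestronglyMeasurable_const (G := fun _ => (1 : ℝ)) (C := 1) (by simp) hδ
  have hintegral := fun δ (hδ : 0 < δ) => exists_abs_setIntegral_withDensity_Icc_sub_le
    hρ hμloc hνloc hlim hFm.aestronglyMeasurable hC hδ
  have hm := tendsto_measureReal_largeIntervals μ
  have hlittleO : ∀ {g : ℝ × ℝ → ℝ},
      (∀ δ > 0, ∃ B, ∀ a b, 0 ≤ a → |g (a, b)| ≤ δ * μ.real (Icc a b) + B) →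
      g =o[largeIntervals μ] fun p => μ.real (Icc p.1 p.2) := fun h =>
    isLittleO_of_forall_abs_le_mul_add hm fun δ hδ =>
      (h δ hδ).imp fun _ hB => eventually_largeIntervals hB
  obtain ⟨B, hB⟩ := hmeasure (c / 2) (half_pos hc₀)
  rw [hasUnifAvg_iff_tendsto, hasUnifAvg_iff_tendsto, largeIntervals_eq_of_abs_sub_le hc₀ hB]
  exact (tendsto_inv_mul_iff_of_isLittleO hc (hm.eventually_ne_atTop 0) (hlittleO hmeasure)
    (hlittleO hintegral)).symm

/-- if `ν ≪ μ` with density `ρ` tending to `c ≠ 0` at `+∞`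
(both measures locally finite and infinite on `ℝ₊`), then `F` has uniform
infinite-volume average `A` w.r.t. `ν` iff it does w.r.t. `μ` (same `A`). -/
theorem stmt_2 (μ ν : Measure ℝ) (ρ : ℝ → ℝ≥0∞) (hρ : Measurable ρ)
    (hν : ν = μ.withDensity ρ)
    (hμloc : ∀ a b : ℝ, μ (Set.Icc a b) < ⊤) (hμinf : μ (Set.Ici 0) = ⊤)
    (hνloc : ∀ a b : ℝ, ν (Set.Icc a b) < ⊤) (hνinf : ν (Set.Ici 0) = ⊤)
    (c : ℝ) (hc : c ≠ 0)
    (hlim : Tendsto (fun x => (ρ x).toReal) atTop (nhds c))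
    (F : ℝ → ℝ) (hFm : Measurable F) (hFb : ∃ C : ℝ, ∀ x : ℝ, |F x| ≤ C) :
    ∀ A : ℝ, (HasUnifAvg ν F A ↔ HasUnifAvg μ F A) :=
  stmt_2_general μ ν ρ hρ hν hμloc hνloc c hc hlim F hFm hFb
end

section
/- Let μ, ν be locally finite infinite measures on ℝ₊ with densities dμ/dm, dν/dm ∈ C¹ which are strictly positive (m = Lebesgue measure). If (d/dx)(dν/dμ)(x) / (dν/dm)(x) → 0 as x → +∞, then for every fixed r > 0, lim_{M→∞} sup over intervals V ⊂ (M,∞) with μ(V) = r of [ (sup_V dν/dμ)·(inf_V dν/dμ)^{-1} − 1 ] = 0. -/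
open Real Filter MeasureTheory ENNReal

/-!
Write `h = g / f` for the density `dν/dμ`. On an interval `[a, b]` the oscillation of `h` is at
most `∫ |h'| ≤ δ ∫ g ≤ δ (sup h) ∫ f = δ r sup h` as soon as `|h'| ≤ δ g` there, which holds far
out by the flatness hypothesis. Taking `δ = ε / (r (1 + ε))` gives `sup h ≤ (1 + ε) inf h`.
-/

lemma sub_le_setIntegral_abs_deriv {h : ℝ → ℝ} (hh : ContDiff ℝ 1 h) {a b x y : ℝ}
    (hx : x ∈ Set.Icc a b) (hy : y ∈ Set.Icc a b) :
    h x - h y ≤ ∫ t in Set.Icc a b, |deriv h t| := by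
  have hdcont : Continuous (deriv h) := hh.continuous_deriv le_rfl
  have hsub : Set.uIoc y x ⊆ Set.Icc a b := fun t ht =>
    ⟨(le_min hy.1 hx.1).trans ht.1.le, ht.2.trans (max_le hy.2 hx.2)⟩
  calc h x - h y = ∫ t in y..x, deriv h t :=
        (intervalIntegral.integral_deriv_eq_sub (fun t _ => hh.differentiable one_ne_zero t)
          (hdcont.intervalIntegrable _ _)).symm
    _ ≤ ∫ t in Set.uIoc y x, |deriv h t| :=
        (le_abs_self _).trans (by
          simpa only [Real.norm_eq_abs] using
            intervalIntegral.norm_integral_le_integral_norm_uIoc (f := deriv h) (μ := volume))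
    _ ≤ ∫ t in Set.Icc a b, |deriv h t| :=
        setIntegral_mono_set hdcont.abs.integrableOn_Icc
          (Eventually.of_forall fun _ => abs_nonneg _) hsub.eventuallyLE

lemma div_sub_div_le_mul_setIntegral {f g : ℝ → ℝ} (hf : ContDiff ℝ 1 f) (hg : ContDiff ℝ 1 g)
    (hfpos : ∀ x, 0 < f x) {a b δ c : ℝ} (hδ : 0 ≤ δ)
    (hderiv : ∀ t ∈ Set.Icc a b, |deriv (fun y => g y / f y) t| ≤ δ * g t)
    (hc : ∀ t ∈ Set.Icc a b, g t / f t ≤ c) {x y : ℝ}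
    (hx : x ∈ Set.Icc a b) (hy : y ∈ Set.Icc a b) :
    g x / f x - g y / f y ≤ δ * (c * ∫ t in Set.Icc a b, f t) := by
  have hgf : ∀ t ∈ Set.Icc a b, g t ≤ c * f t := fun t ht =>
    (div_le_iff₀ (hfpos t)).1 (hc t ht)
  calc g x / f x - g y / f y
      ≤ ∫ t in Set.Icc a b, |deriv (fun y => g y / f y) t| :=
        sub_le_setIntegral_abs_deriv (hg.div hf fun t => (hfpos t).ne') hx hy
    _ ≤ ∫ t in Set.Icc a b, δ * g t :=
        setIntegral_mono_on
          ((hg.div hf fun t => (hfpos t).ne').continuous_deriv le_rfl).abs.integrableOn_Icc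
          (hg.continuous.integrableOn_Icc.const_mul δ) measurableSet_Icc hderiv
    _ ≤ ∫ t in Set.Icc a b, δ * (c * f t) :=
        setIntegral_mono_on (hg.continuous.integrableOn_Icc.const_mul δ)
          ((hf.continuous.integrableOn_Icc.const_mul c).const_mul δ) measurableSet_Icc
          fun t ht => mul_le_mul_of_nonneg_left (hgf t ht) hδ
    _ = δ * (c * ∫ t in Set.Icc a b, f t) := by
        rw [integral_const_mul, integral_const_mul]

lemma toReal_withDensity_ofReal_Icc {f : ℝ → ℝ} (hf : Continuous f) (hf0 : ∀ x, 0 ≤ f x)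
    (a b : ℝ) :
    (volume.withDensity (fun x => ENNReal.ofReal (f x)) (Set.Icc a b)).toReal =
      ∫ x in Set.Icc a b, f x := by
  rw [withDensity_apply _ measurableSet_Icc,
    ← ofReal_integral_eq_lintegral_ofReal hf.integrableOn_Icc (Eventually.of_forall hf0),
    ENNReal.toReal_ofReal (setIntegral_nonneg measurableSet_Icc fun x _ => hf0 x)]

lemma div_sub_one_le_of_sub_le {m M ε : ℝ} (hm : 0 < m) (hε : 0 < ε)
    (h : M - m ≤ ε / (1 + ε) * M) : M / m - 1 ≤ ε := by
  rw [div_mul_eq_mul_div, le_div_iff₀ (by linarith)] at h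
  rw [sub_le_iff_le_add, div_le_iff₀ hm]
  nlinarith

theorem stmt_4_general (f g : ℝ → ℝ)
    (hf : ContDiff ℝ 1 f) (hg : ContDiff ℝ 1 g)
    (hfpos : ∀ x : ℝ, 0 < f x) (hgpos : ∀ x : ℝ, 0 < g x)
    (μ : Measure ℝ)
    (hμ : μ = volume.withDensity (fun x => ENNReal.ofReal (f x)))
    (hflat : Tendsto (fun x => deriv (fun y => g y / f y) x / g x)
      atTop (nhds 0)) :
    ∀ r : ℝ, 0 < r → ∀ ε : ℝ, 0 < ε → ∃ M : ℝ, 0 ≤ M ∧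
      ∀ a b : ℝ, M < a → a ≤ b → (μ (Set.Icc a b)).toReal = r →
        sSup ((fun x => g x / f x) '' Set.Icc a b) /
          sInf ((fun x => g x / f x) '' Set.Icc a b) - 1 ≤ ε := by
  intro r hr ε hε
  set δ := ε / (r * (1 + ε))
  have hδ : 0 < δ := by positivity
  obtain ⟨M₀, hM₀⟩ := eventually_atTop.1
    (((tendsto_zero_iff_abs_tendsto_zero _).1 hflat).eventually (gt_mem_nhds hδ))
  refine ⟨max M₀ 0, le_max_right _ _, fun a b ha hab hμr => ?_⟩
  have hderiv : ∀ t ∈ Set.Icc a b, |deriv (fun y => g y / f y) t| ≤ δ * g t := fun t ht => by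
    have := hM₀ t (((le_max_left _ _).trans_lt ha).le.trans ht.1)
    rw [Function.comp_apply, abs_div, abs_of_pos (hgpos t), div_lt_iff₀ (hgpos t)] at this
    exact this.le
  have hcont : ContinuousOn (fun x => g x / f x) (Set.Icc a b) :=
    (hg.continuous.div hf.continuous fun x => (hfpos x).ne').continuousOn
  obtain ⟨p, hp, hsup⟩ := isCompact_Icc.exists_sSup_image_eq (Set.nonempty_Icc.2 hab) hcont
  obtain ⟨q, hq, hinf⟩ := isCompact_Icc.exists_sInf_image_eq (Set.nonempty_Icc.2 hab) hcont
  have hmax : ∀ t ∈ Set.Icc a b, g t / f t ≤ g p / f p := fun t ht =>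
    hsup ▸ le_csSup (isCompact_Icc.image_of_continuousOn hcont).bddAbove ⟨t, ht, rfl⟩
  rw [hμ, toReal_withDensity_ofReal_Icc hf.continuous (fun x => (hfpos x).le)] at hμr
  have hosc := div_sub_div_le_mul_setIntegral hf hg hfpos hδ.le hderiv hmax hp hq
  rw [hμr] at hosc
  rw [hsup, hinf]
  refine div_sub_one_le_of_sub_le (div_pos (hgpos q) (hfpos q)) hε (hosc.trans_eq ?_)
  simp only [δ]
  field_simp

/-- let `μ, ν` have strictly positive `C¹` densities `f, g` w.r.t.
Lebesgue measure on `ℝ₊`. If `(d/dx)(g/f)(x) / g(x) → 0` as `x → +∞`, then for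
every fixed `r > 0` the oscillation `sup_V (g/f) / inf_V (g/f) − 1` over
intervals `V ⊆ (M,∞)` with `μ(V) = r` tends to `0` as `M → ∞`. -/
theorem stmt_4 (f g : ℝ → ℝ)
    (hf : ContDiff ℝ 1 f) (hg : ContDiff ℝ 1 g)
    (hfpos : ∀ x : ℝ, 0 < f x) (hgpos : ∀ x : ℝ, 0 < g x)
    (μ ν : Measure ℝ)
    (hμ : μ = volume.withDensity (fun x => ENNReal.ofReal (f x)))
    (hν : ν = volume.withDensity (fun x => ENNReal.ofReal (g x)))
    (hμinf : μ (Set.Ici 0) = ⊤) (hνinf : ν (Set.Ici 0) = ⊤)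
    (hflat : Tendsto (fun x => deriv (fun y => g y / f y) x / g x)
      atTop (nhds 0)) :
    ∀ r : ℝ, 0 < r → ∀ ε : ℝ, 0 < ε → ∃ M : ℝ, 0 ≤ M ∧
      ∀ a b : ℝ, M < a → a ≤ b → (μ (Set.Icc a b)).toReal = r →
        sSup ((fun x => g x / f x) '' Set.Icc a b) /
          sInf ((fun x => g x / f x) '' Set.Icc a b) - 1 ≤ ε :=
  stmt_4_general f g hf hg hfpos hgpos μ hμ hflat
end

section
/- Let F(x) = cos((x+1)^{1-q}) with q ∈ (0,1). Then for every r > 0, limsup_{a→∞} (1/r)∫_a^{a+r} F(x) dx = 1 and liminf_{a→∞} (1/r)∫_a^{a+r} F(x) dx = −1. In particular, F does not have a uniform infinite-volume average w.r.t. Lebesgue measure. -/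
open Real Filter MeasureTheory

/-- Key construction: for any `δ > 0`, offset `c ≥ 0` and threshold `a₀`, we can find
`a ≥ max a₀ 0` and `n : ℕ` such that the phase `(x+1)^(1-q)` stays in
`[c + 2πn, c + 2πn + δ]` on the whole interval `[a, a+r]`. -/
lemma key_interval (q : ℝ) (hq0 : 0 < q) (hq1 : q < 1) (r δ c a₀ : ℝ)
    (hr : 0 < r) (hδ : 0 < δ) (hc : 0 ≤ c) :
    ∃ a : ℝ, a₀ ≤ a ∧ 0 ≤ a ∧ ∃ n : ℕ,
      ∀ x ∈ Set.Icc a (a + r),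
        c + n * (2 * π) ≤ (x + 1) ^ (1 - q) ∧ (x + 1) ^ (1 - q) ≤ c + n * (2 * π) + δ := by
  have h1q : 0 < 1 - q := by linarith
  set p : ℝ := (1 - q)⁻¹ with hp_def
  have hppos : 0 < p := inv_pos.2 h1q
  have hmul : (1 - q) * p = 1 := mul_inv_cancel₀ h1q.ne'
  have hp1 : 1 < p := by nlinarith [hmul]
  set A : ℝ := max a₀ 0 + 1 with hA_def
  have hA1 : 1 ≤ A := by have := le_max_right a₀ (0:ℝ); linarith
  have hA0 : 0 ≤ A := by linarith
  set M : ℝ := max (r / (p * δ)) 1 with hM_def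
  have hM1 : 1 ≤ M := le_max_right _ _
  have hM0 : 0 ≤ M := by linarith
  set T : ℝ := max (max 1 (A ^ (1 - q))) (M ^ (p - 1)⁻¹) with hT_def
  have hπ : 0 < 2 * π := by positivity
  obtain ⟨n, hn⟩ := exists_nat_ge ((T - c) / (2 * π))
  set θ : ℝ := c + n * (2 * π) with hθ_def
  have hTθ : T ≤ θ := by
    have : T - c ≤ n * (2 * π) := by
      rw [div_le_iff₀ hπ] at hn; linarith
    linarith
  have hθ1 : 1 ≤ θ := le_trans (le_trans (le_max_left 1 _) (le_max_left _ _)) hTθ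
  have hθpos : 0 < θ := by linarith
  refine ⟨θ ^ p - 1, ?_, ?_, n, ?_⟩
  · -- a₀ ≤ a
    have h1 : A ^ (1 - q) ≤ θ := le_trans (le_trans (le_max_right 1 _) (le_max_left _ _)) hTθ
    have h2 : (A ^ (1 - q)) ^ p ≤ θ ^ p :=
      Real.rpow_le_rpow (Real.rpow_nonneg hA0 _) h1 hppos.le
    have h3 : (A ^ (1 - q)) ^ p = A := by
      rw [← Real.rpow_mul hA0, hmul, Real.rpow_one]
    have : A ≤ θ ^ p := by rw [← h3]; exact h2
    have ha₀ : a₀ ≤ A - 1 := by simp [hA_def]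
    linarith
  · -- 0 ≤ a
    have : (1 : ℝ) ^ p ≤ θ ^ p := Real.rpow_le_rpow zero_le_one hθ1 hppos.le
    rw [Real.one_rpow] at this
    linarith
  · intro x hx
    obtain ⟨hx1, hx2⟩ := hx
    have hx1' : θ ^ p ≤ x + 1 := by linarith
    have hx0 : (0 : ℝ) ≤ x + 1 := le_trans (Real.rpow_nonneg hθpos.le p) hx1'
    have hθpθ : (θ ^ p) ^ (1 - q) = θ := by
      rw [← Real.rpow_mul hθpos.le, mul_comm, hmul, Real.rpow_one]
    constructor
    · -- lower bound
      have := Real.rpow_le_rpow (Real.rpow_nonneg hθpos.le p) hx1' h1q.le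
      rw [hθpθ] at this
      exact this
    · -- upper bound
      have hx2' : x + 1 ≤ θ ^ p + r := by linarith
      -- Bernoulli : θ^p + r ≤ (θ+δ)^p
      have hMθ : M ≤ θ ^ (p - 1) := by
        have h1 : M ^ (p - 1)⁻¹ ≤ θ := le_trans (le_max_right _ _) hTθ
        have hps : 0 < p - 1 := by linarith
        have h2 : (M ^ (p - 1)⁻¹) ^ (p - 1) ≤ θ ^ (p - 1) :=
          Real.rpow_le_rpow (Real.rpow_nonneg hM0 _) h1 hps.le
        rwa [← Real.rpow_mul hM0, inv_mul_cancel₀ hps.ne', Real.rpow_one] at h2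
      have hrM : r ≤ p * δ * θ ^ (p - 1) := by
        have h1 : r / (p * δ) ≤ M := le_max_left _ _
        have hpδ : 0 < p * δ := by positivity
        have : r / (p * δ) ≤ θ ^ (p - 1) := le_trans h1 hMθ
        rw [div_le_iff₀ hpδ] at this
        linarith [this]
      have hbern : 1 + p * (δ / θ) ≤ (1 + δ / θ) ^ p := by
        apply one_add_mul_self_le_rpow_one_add _ hp1.le
        have : 0 ≤ δ / θ := by positivity
        linarith
      have hsplit : (θ + δ) ^ p = θ ^ p * (1 + δ / θ) ^ p := by
        rw [← Real.mul_rpow hθpos.le (by positivity)]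
        congr 1
        field_simp
      have hkey : θ ^ p + r ≤ (θ + δ) ^ p := by
        have h1 : θ ^ p * (1 + p * (δ / θ)) ≤ θ ^ p * (1 + δ / θ) ^ p :=
          mul_le_mul_of_nonneg_left hbern (Real.rpow_nonneg hθpos.le p)
        have h2 : θ ^ p * (1 + p * (δ / θ)) = θ ^ p + p * δ * (θ ^ p / θ) := by
          field_simp
        have h3 : θ ^ p / θ = θ ^ (p - 1) := by
          rw [Real.rpow_sub hθpos, Real.rpow_one]
        rw [h2, h3] at h1
        rw [hsplit]
        linarith
      have h4 : x + 1 ≤ (θ + δ) ^ p := by linarith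
      have h5 := Real.rpow_le_rpow hx0 h4 h1q.le
      have h6 : ((θ + δ) ^ p) ^ (1 - q) = θ + δ := by
        rw [← Real.rpow_mul (by linarith : (0:ℝ) ≤ θ + δ), mul_comm, hmul, Real.rpow_one]
      rw [h6] at h5
      exact h5

/-- `cos ((x+1)^(1-q)) ≥ 1 - ε` on some interval `[a, a+r]` with `a` arbitrarily large. -/
lemma freq_hi (q : ℝ) (hq0 : 0 < q) (hq1 : q < 1) (r ε : ℝ) (hr : 0 < r) (hε : 0 < ε)
    (a₀ : ℝ) :
    ∃ a, a₀ ≤ a ∧ 0 ≤ a ∧ ∀ x ∈ Set.Icc a (a + r),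
      1 - ε ≤ Real.cos ((x + 1) ^ (1 - q)) := by
  obtain ⟨a, ha₀, ha0, n, hph⟩ :=
    key_interval q hq0 hq1 r (min 1 ε) 0 a₀ hr (lt_min one_pos hε) le_rfl
  refine ⟨a, ha₀, ha0, fun x hx => ?_⟩
  obtain ⟨h1, h2⟩ := hph x hx
  set s : ℝ := (x + 1) ^ (1 - q) - n * (2 * π) with hs_def
  have hs0 : 0 ≤ s := by simp only [hs_def]; linarith
  have hs1 : s ≤ min 1 ε := by simp only [hs_def]; linarith
  have hcos : Real.cos ((x + 1) ^ (1 - q)) = Real.cos s := by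
    have : (x + 1) ^ (1 - q) = s + (n : ℤ) * (2 * π) := by push_cast; simp [hs_def]
    rw [this, Real.cos_add_int_mul_two_pi]
  rw [hcos]
  have hb := Real.one_sub_sq_div_two_le_cos (x := s)
  have hsε : s ≤ ε := le_trans hs1 (min_le_right _ _)
  have hs1' : s ≤ 1 := le_trans hs1 (min_le_left _ _)
  nlinarith
/-- `cos ((x+1)^(1-q)) ≤ -1 + ε` on some interval `[a, a+r]` with `a` arbitrarily large. -/
lemma freq_lo (q : ℝ) (hq0 : 0 < q) (hq1 : q < 1) (r ε : ℝ) (hr : 0 < r) (hε : 0 < ε)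
    (a₀ : ℝ) :
    ∃ a, a₀ ≤ a ∧ 0 ≤ a ∧ ∀ x ∈ Set.Icc a (a + r),
      Real.cos ((x + 1) ^ (1 - q)) ≤ -1 + ε := by
  obtain ⟨a, ha₀, ha0, n, hph⟩ :=
    key_interval q hq0 hq1 r (min 1 ε) π a₀ hr (lt_min one_pos hε) Real.pi_pos.le
  refine ⟨a, ha₀, ha0, fun x hx => ?_⟩
  obtain ⟨h1, h2⟩ := hph x hx
  set s : ℝ := (x + 1) ^ (1 - q) - π - n * (2 * π) with hs_def
  have hs0 : 0 ≤ s := by simp only [hs_def]; linarith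
  have hs1 : s ≤ min 1 ε := by simp only [hs_def]; linarith
  have hcos : Real.cos ((x + 1) ^ (1 - q)) = -Real.cos s := by
    have : (x + 1) ^ (1 - q) = (s + π) + (n : ℤ) * (2 * π) := by push_cast; simp [hs_def]; ring
    rw [this, Real.cos_add_int_mul_two_pi, Real.cos_add_pi]
  rw [hcos]
  have hb := Real.one_sub_sq_div_two_le_cos (x := s)
  have hsε : s ≤ ε := le_trans hs1 (min_le_right _ _)
  have hs1' : s ≤ 1 := le_trans hs1 (min_le_left _ _)
  nlinarith

/-- for `F(x) = cos((x+1)^{1-q})` with `q ∈ (0,1)` and every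
`r > 0`, the limsup (resp. liminf) as `a → ∞` of the Lebesgue averages
`(1/r)∫_a^{a+r} F` is `1` (resp. `-1`); in particular `F` has no uniform
infinite-volume average w.r.t. Lebesgue measure. -/
theorem stmt_8 (q : ℝ) (hq0 : 0 < q) (hq1 : q < 1)
    (F : ℝ → ℝ) (hF : F = fun x => Real.cos ((x + 1) ^ (1 - q))) :
    (∀ r : ℝ, 0 < r →
      limsup (fun a : ℝ => (1 / r) * ∫ x in a..(a + r), F x) atTop = 1 ∧
      liminf (fun a : ℝ => (1 / r) * ∫ x in a..(a + r), F x) atTop = -1) ∧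
    ¬ ∃ A : ℝ, HasUnifAvg volume F A := by
  subst hF
  have h1q : 0 ≤ 1 - q := by linarith
  set F : ℝ → ℝ := fun x => Real.cos ((x + 1) ^ (1 - q)) with hF_def
  have hFc : Continuous F := by
    exact Real.continuous_cos.comp
      ((continuous_id.add continuous_const).rpow_const (fun x => Or.inr h1q))
  -- the averages, bounds and frequently-statements, for every r > 0
  have main : ∀ r : ℝ, 0 < r →
      (∀ a : ℝ, |(1 / r) * ∫ x in a..(a + r), F x| ≤ 1) ∧
      (∀ ε : ℝ, 0 < ε → ∀ a₀ : ℝ, ∃ a, a₀ ≤ a ∧ 0 ≤ a ∧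
        1 - ε ≤ (1 / r) * ∫ x in a..(a + r), F x) ∧
      (∀ ε : ℝ, 0 < ε → ∀ a₀ : ℝ, ∃ a, a₀ ≤ a ∧ 0 ≤ a ∧
        (1 / r) * ∫ x in a..(a + r), F x ≤ -1 + ε) := by
    intro r hr
    have hint : ∀ a b : ℝ, IntervalIntegrable F volume a b := fun a b =>
      (hFc.intervalIntegrable a b)
    refine ⟨?_, ?_, ?_⟩
    · intro a
      have h1 : ‖∫ x in a..(a + r), F x‖ ≤ 1 * |a + r - a| :=
        intervalIntegral.norm_integral_le_of_norm_le_const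
          (fun x _ => by simpa [hF_def] using Real.abs_cos_le_one ((x + 1) ^ (1 - q)))
      have h2 : |∫ x in a..(a + r), F x| ≤ r := by
        simpa [abs_of_pos hr] using h1
      rw [abs_mul, abs_of_pos (by positivity : (0:ℝ) < 1 / r)]
      calc (1 / r) * |∫ x in a..(a + r), F x| ≤ (1 / r) * r :=
            mul_le_mul_of_nonneg_left h2 (by positivity)
        _ = 1 := by field_simp
    · intro ε hε a₀
      obtain ⟨a, ha₀, ha0, hcos⟩ := freq_hi q hq0 hq1 r ε hr hε a₀
      refine ⟨a, ha₀, ha0, ?_⟩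
      have hab : a ≤ a + r := by linarith
      have hmono : ∫ x in a..(a + r), (1 - ε) ≤ ∫ x in a..(a + r), F x :=
        intervalIntegral.integral_mono_on hab (intervalIntegrable_const) (hint a (a + r))
          (fun x hx => hcos x hx)
      rw [intervalIntegral.integral_const, smul_eq_mul] at hmono
      have : r * (1 - ε) ≤ ∫ x in a..(a + r), F x := by
        have : a + r - a = r := by ring
        rw [this] at hmono; exact hmono
      have h2 : (1 / r) * (r * (1 - ε)) ≤ (1 / r) * ∫ x in a..(a + r), F x :=
        mul_le_mul_of_nonneg_left this (by positivity)
      calc 1 - ε = (1 / r) * (r * (1 - ε)) := by field_simp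
        _ ≤ _ := h2
    · intro ε hε a₀
      obtain ⟨a, ha₀, ha0, hcos⟩ := freq_lo q hq0 hq1 r ε hr hε a₀
      refine ⟨a, ha₀, ha0, ?_⟩
      have hab : a ≤ a + r := by linarith
      have hmono : ∫ x in a..(a + r), F x ≤ ∫ x in a..(a + r), (-1 + ε) :=
        intervalIntegral.integral_mono_on hab (hint a (a + r)) (intervalIntegrable_const)
          (fun x hx => hcos x hx)
      rw [intervalIntegral.integral_const, smul_eq_mul] at hmono
      have h1 : ∫ x in a..(a + r), F x ≤ r * (-1 + ε) := by
        have : a + r - a = r := by ring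
        rw [this] at hmono; exact hmono
      have h2 : (1 / r) * ∫ x in a..(a + r), F x ≤ (1 / r) * (r * (-1 + ε)) :=
        mul_le_mul_of_nonneg_left h1 (by positivity)
      calc (1 / r) * ∫ x in a..(a + r), F x ≤ (1 / r) * (r * (-1 + ε)) := h2
        _ = -1 + ε := by field_simp
  have limsupliminf : ∀ r : ℝ, 0 < r →
      limsup (fun a : ℝ => (1 / r) * ∫ x in a..(a + r), F x) atTop = 1 ∧
      liminf (fun a : ℝ => (1 / r) * ∫ x in a..(a + r), F x) atTop = -1 := by
    intro r hr
    obtain ⟨habs, hhi, hlo⟩ := main r hr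
    set u : ℝ → ℝ := fun a => (1 / r) * ∫ x in a..(a + r), F x with hu_def
    have hub : ∀ a, u a ≤ 1 := fun a => (abs_le.1 (habs a)).2
    have hlb : ∀ a, -1 ≤ u a := fun a => (abs_le.1 (habs a)).1
    have hbdd_le : IsBoundedUnder (· ≤ ·) atTop u := isBoundedUnder_of ⟨1, hub⟩
    have hbdd_ge : IsBoundedUnder (· ≥ ·) atTop u := isBoundedUnder_of ⟨-1, hlb⟩
    have hcob_le : IsCoboundedUnder (· ≤ ·) atTop u := hbdd_ge.isCoboundedUnder_le
    have hcob_ge : IsCoboundedUnder (· ≥ ·) atTop u := hbdd_le.isCoboundedUnder_ge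
    constructor
    · apply le_antisymm
      · exact limsup_le_of_le hcob_le (Eventually.of_forall hub)
      · apply le_of_forall_sub_le
        intro ε hε
        apply le_limsup_of_frequently_le _ hbdd_le
        rw [frequently_atTop]
        intro a₀
        obtain ⟨a, ha₀, _, h⟩ := hhi ε hε a₀
        exact ⟨a, ha₀, h⟩
    · apply le_antisymm
      · have : ∀ ε > (0:ℝ), liminf u atTop ≤ -1 + ε := by
          intro ε hε
          apply liminf_le_of_frequently_le _ hbdd_ge
          rw [frequently_atTop]
          intro a₀
          obtain ⟨a, ha₀, _, h⟩ := hlo ε hε a₀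
          exact ⟨a, ha₀, h⟩
        by_contra hcon
        push_neg at hcon
        have h2 := this ((liminf u atTop - (-1)) / 2) (by linarith)
        linarith
      · exact le_liminf_of_le hcob_ge (Eventually.of_forall hlb)
  refine ⟨limsupliminf, ?_⟩
  rintro ⟨A, hA⟩
  obtain ⟨R, hR, hRprop⟩ := hA (1/2) (by norm_num)
  set r : ℝ := max R 1 with hr_def
  have hr : 0 < r := lt_of_lt_of_le one_pos (le_max_right _ _)
  obtain ⟨habs, hhi, hlo⟩ := main r hr
  have hvol : ∀ a : ℝ, (volume (Set.Icc a (a + r))).toReal = r := by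
    intro a
    rw [Real.volume_Icc]
    rw [ENNReal.toReal_ofReal (by linarith)]
    ring
  have hinteq : ∀ a : ℝ, (∫ x in Set.Icc a (a + r), F x) = ∫ x in a..(a + r), F x := by
    intro a
    rw [MeasureTheory.integral_Icc_eq_integral_Ioc,
      intervalIntegral.integral_of_le (by linarith : a ≤ a + r)]
  have key : ∀ a : ℝ, 0 ≤ a → |(1 / r) * (∫ x in a..(a + r), F x) - A| ≤ 1/2 := by
    intro a ha
    have h := hRprop a (a + r) ha (by linarith) (by rw [hvol]; exact le_max_left _ _)
    rw [hvol, hinteq] at h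
    rw [one_div]
    exact h
  obtain ⟨a₁, _, ha₁0, h₁⟩ := hhi (1/4) (by norm_num) 0
  obtain ⟨a₂, _, ha₂0, h₂⟩ := hlo (1/4) (by norm_num) 0
  have k₁ := key a₁ ha₁0
  have k₂ := key a₂ ha₂0
  rw [abs_le] at k₁ k₂
  linarith [k₁.1, k₁.2, k₂.1, k₂.2]
end

section
/- Let T: ℝ₊ → ℝ₊ be a map with T(x) = τ₀(x) on I₀ = (a₁,∞), where τ₀ is C¹, τ₀' > 1, and suppose T is exact with respect to Lebesgue measure. Then τ₀(x) < x for all x ∈ I₀. -/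
open Real Filter Set MeasureTheory

/-! If `τ₀` had a point `x₀ ≥ τ₀ x₀` in `I₀`, then `τ₀' > 1` forces `τ₀ y > y` beyond `x₀`, so the
orbit `cₙ = τ₀ⁿ y₀` of a point `y₀ > x₀` increases and `T` shifts each interval `[cₙ, cₙ₊₁)` onto
the next one. These intervals wander, and the points whose orbit eventually visits the
even-indexed ones form a tail set containing `[c₀, c₁)` and missing `[c₁, c₂)`, contradicting
exactness. -/

section Derivative

variable {f : ℝ → ℝ} {D : Set ℝ}

theorem strictMonoOn_sub_id_of_one_lt_deriv (hDo : IsOpen D) (hDc : Convex ℝ D)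
    (hf : ∀ x ∈ D, 1 < deriv f x) : StrictMonoOn (fun x => f x - x) D := by
  have hdiff : ∀ x ∈ D, DifferentiableAt ℝ f x := fun x hx =>
    differentiableAt_of_deriv_ne_zero (by linarith [hf x hx])
  refine strictMonoOn_of_deriv_pos hDc
    (fun x hx => ((hdiff x hx).continuousAt.sub continuousAt_id).continuousWithinAt) ?_
  intro x hx
  rw [hDo.interior_eq] at hx
  rw [deriv_fun_sub (hdiff x hx) differentiableAt_fun_id, deriv_id'']
  linarith [hf x hx]

theorem strictMonoOn_of_one_lt_deriv (hDo : IsOpen D) (hDc : Convex ℝ D)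
    (hf : ∀ x ∈ D, 1 < deriv f x) : StrictMonoOn f D := by
  intro x hx y hy hxy
  have := strictMonoOn_sub_id_of_one_lt_deriv hDo hDc hf hx hy hxy
  linarith

end Derivative

section Orbit

variable {f : ℝ → ℝ} {x₀ y : ℝ}

theorem lt_iterate_of_lt_self (hgrow : ∀ z, x₀ < z → z < f z) (hy : x₀ < y) (n : ℕ) :
    x₀ < f^[n] y := by
  induction n with
  | zero => exact hy
  | succ n ih =>
    rw [Function.iterate_succ_apply']
    exact ih.trans (hgrow _ ih)

theorem strictMono_iterate_of_lt_self (hgrow : ∀ z, x₀ < z → z < f z) (hy : x₀ < y) :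
    StrictMono fun n => f^[n] y :=
  strictMono_nat_of_lt_succ fun n => by
    simpa only [Function.iterate_succ_apply'] using hgrow _ (lt_iterate_of_lt_self hgrow hy n)

theorem mapsTo_Ico_iterate_of_lt_self (hmono : StrictMonoOn f (Ioi x₀))
    (hgrow : ∀ z, x₀ < z → z < f z) (hy : x₀ < y) (n : ℕ) :
    MapsTo f (Ico (f^[n] y) (f^[n + 1] y)) (Ico (f^[n + 1] y) (f^[n + 1 + 1] y)) := by
  intro z ⟨hlo, hhi⟩
  have hn : f^[n] y ∈ Ioi x₀ := lt_iterate_of_lt_self hgrow hy n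
  have hn₁ : f^[n + 1] y ∈ Ioi x₀ := lt_iterate_of_lt_self hgrow hy (n + 1)
  have hz : z ∈ Ioi x₀ := lt_of_lt_of_le hn hlo
  constructor
  · rw [Function.iterate_succ_apply']
    exact hmono.monotoneOn hn hz hlo
  · rw [Function.iterate_succ_apply' f (n + 1)]
    exact hmono hz hn₁ hhi

end Orbit

section WanderingSets

variable {α : Type*} {T : α → α} {A : ℕ → Set α}

def evenTail (T : α → α) (A : ℕ → Set α) : Set α :=
  ⋃ N, T^[N] ⁻¹' ⋃ k, A (2 * k + N)

theorem mapsTo_iterate_of_mapsTo_succ (hmaps : ∀ n, MapsTo T (A n) (A (n + 1))) (j n : ℕ) :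
    MapsTo T^[j] (A n) (A (n + j)) := by
  induction j with
  | zero => exact mapsTo_id _
  | succ j ih =>
    rw [Function.iterate_succ']
    exact (hmaps _).comp ih

theorem measurableSet_evenTail [MeasurableSpace α] (hT : Measurable T)
    (hA : ∀ n, MeasurableSet (A n)) : MeasurableSet (evenTail T A) :=
  .iUnion fun N => (hT.iterate N) (.iUnion fun _ => hA _)

theorem evenTail_eq_preimage_iterate (hmaps : ∀ n, MapsTo T (A n) (A (n + 1))) (n : ℕ) :
    evenTail T A = T^[n] ⁻¹' ⋃ N, T^[N] ⁻¹' ⋃ k, A (2 * k + (N + n)) := by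
  ext x
  simp only [evenTail, mem_preimage, mem_iUnion, ← Function.iterate_add_apply]
  constructor
  · rintro ⟨N, k, hk⟩
    refine ⟨N, k, ?_⟩
    have := mapsTo_iterate_of_mapsTo_succ hmaps n _ hk
    rwa [← Function.iterate_add_apply, add_comm n N, add_assoc] at this
  · rintro ⟨N, k, hk⟩
    exact ⟨N + n, k, hk⟩

theorem exists_measurableSet_evenTail_eq_preimage [MeasurableSpace α] (hT : Measurable T)
    (hA : ∀ n, MeasurableSet (A n)) (hmaps : ∀ n, MapsTo T (A n) (A (n + 1))) (n : ℕ) :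
    ∃ t, MeasurableSet t ∧ evenTail T A = T^[n] ⁻¹' t :=
  ⟨_, .iUnion fun N => (hT.iterate N) (.iUnion fun _ => hA _),
    evenTail_eq_preimage_iterate hmaps n⟩

theorem subset_evenTail : A 0 ⊆ evenTail T A := fun _ hx =>
  mem_iUnion.2 ⟨0, mem_iUnion.2 ⟨0, hx⟩⟩

theorem disjoint_evenTail (hmaps : ∀ n, MapsTo T (A n) (A (n + 1)))
    (hdisj : Pairwise (Function.onFun Disjoint A)) : Disjoint (A 1) (evenTail T A) := by
  refine disjoint_left.2 fun x hx hs => ?_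
  simp only [evenTail, mem_iUnion, mem_preimage] at hs
  obtain ⟨N, k, hk⟩ := hs
  have hodd : T^[N] x ∈ A (1 + N) := mapsTo_iterate_of_mapsTo_succ hmaps N 1 hx
  exact hdisj (show 2 * k + N ≠ 1 + N by omega) |>.ne_of_mem hk hodd rfl

end WanderingSets

theorem stmt_12_general (a₁ : ℝ) (T τ₀ : ℝ → ℝ)
    (hTm : Measurable T)
    (hTτ : ∀ x ∈ Ioi a₁, T x = τ₀ x)
    (hd : ∀ x ∈ Ioi a₁, 1 < deriv τ₀ x)
    (hexact : ∀ s : Set ℝ, MeasurableSet s →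
      (∀ n : ℕ, ∃ t : Set ℝ, MeasurableSet t ∧ s = (T^[n]) ⁻¹' t) →
      volume.restrict (Ici 0) s = 0 ∨ volume.restrict (Ici 0) sᶜ = 0) :
    ∀ x ∈ Ioi a₁, τ₀ x < x := by
  by_contra! ⟨x₀, hx₀, hle⟩
  have hsub : Ioi x₀ ⊆ Ioi a₁ := Ioi_subset_Ioi (le_of_lt hx₀)
  have hgrow : ∀ z, x₀ < z → z < τ₀ z := fun z hz => by
    linarith [strictMonoOn_sub_id_of_one_lt_deriv isOpen_Ioi (convex_Ioi a₁) hd hx₀ (hsub hz) hz]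
  have hmono : StrictMonoOn τ₀ (Ioi x₀) :=
    (strictMonoOn_of_one_lt_deriv isOpen_Ioi (convex_Ioi a₁) hd).mono hsub
  set y₀ := max x₀ 0 + 1
  have hy₀ : x₀ < y₀ := by linarith [le_max_left x₀ 0]
  have hc := strictMono_iterate_of_lt_self hgrow hy₀
  set A : ℕ → Set ℝ := fun n => Ico (τ₀^[n] y₀) (τ₀^[n + 1] y₀)
  have hmaps : ∀ n, MapsTo T (A n) (A (n + 1)) := fun n =>
    (mapsTo_Ico_iterate_of_lt_self hmono hgrow hy₀ n).congr fun z hz =>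
      (hTτ z (hsub (lt_of_lt_of_le (lt_iterate_of_lt_self hgrow hy₀ n) hz.1))).symm
  have hpos : ∀ n, volume.restrict (Ici 0) (A n) ≠ 0 := fun n => by
    have hnonneg : 0 ≤ τ₀^[n] y₀ :=
      (by linarith [le_max_right x₀ 0] : (0 : ℝ) ≤ y₀).trans (hc.monotone (Nat.zero_le n))
    rw [Measure.restrict_apply measurableSet_Ico,
      inter_eq_left.2 (Ico_subset_Ici_self.trans (Ici_subset_Ici.2 hnonneg)), Real.volume_Ico]
    exact ENNReal.ofReal_ne_zero_iff.2 (sub_pos.2 (hc n.lt_succ_self))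
  have hdisj : Pairwise (Function.onFun Disjoint A) := by
    simpa only [Order.succ_eq_add_one] using hc.monotone.pairwise_disjoint_on_Ico_succ
  rcases hexact _ (measurableSet_evenTail hTm fun _ => measurableSet_Ico)
      (exists_measurableSet_evenTail_eq_preimage hTm (fun _ => measurableSet_Ico) hmaps) with h | h
  · exact hpos 0 (measure_mono_null subset_evenTail h)
  · exact hpos 1 (measure_mono_null (disjoint_evenTail hmaps hdisj).subset_compl_right h)

/-- let `T : ℝ₊ → ℝ₊` coincide on `I₀ = (a₁,∞)` with a `C¹`
function `τ₀` whose derivative is `> 1` there, and suppose `T` is exact w.r.t.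
Lebesgue measure on `ℝ₊` (every tail-measurable set is null or conull).
Then `τ₀(x) < x` for all `x ∈ I₀`. -/
theorem stmt_12 (a₁ : ℝ) (ha₁ : 0 ≤ a₁) (T τ₀ : ℝ → ℝ)
    (hTm : Measurable T) (hTmaps : MapsTo T (Ici 0) (Ici 0))
    (hTτ : ∀ x ∈ Ioi a₁, T x = τ₀ x)
    (hC1 : ContDiffOn ℝ 1 τ₀ (Ioi a₁))
    (hd : ∀ x ∈ Ioi a₁, 1 < deriv τ₀ x)
    (hexact : ∀ s : Set ℝ, MeasurableSet s →
      (∀ n : ℕ, ∃ t : Set ℝ, MeasurableSet t ∧ s = (T^[n]) ⁻¹' t) →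
      volume.restrict (Ici 0) s = 0 ∨ volume.restrict (Ici 0) sᶜ = 0) :
    ∀ x ∈ Ioi a₁, τ₀ x < x :=
  stmt_12_general a₁ T τ₀ hTm hTτ hd hexact
end

section
/- Let F ∈ L^∞(ℝ₊, Lebesgue) with uniform infinite-volume average 0, i.e. for every ε' > 0 there is r > 0 with sup_{a≥0} |(1/r)∫_a^{a+r} F dx| ≤ ε'. For each δ > 0 there exists ε > 0 such that for every g ∈ C¹(ℝ₊) with g > 0, ∫₀^∞ g dx = 1, and |g'(x)|/g(x) ≤ ε for all x ≥ M (for some M ≥ 0), one has |∫_M^∞ F g dx| ≤ δ. -/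
open Real Filter Set MeasureTheory

/-!
Cut `[M, ∞)` into blocks of length `r`, where `r` is chosen so that every block average of `F`
is at most `δ / 2`. On a block, `g` differs from its minimum `g m` by at most
`∫ |g'| ≤ ε ∫ g`, so `∫ F g = g m ∫ F + ∫ F (g - g m)` is bounded by
`(δ / 2 + ‖F‖_∞ ε r) ∫ g`. With `ε = δ / (2 r ‖F‖_∞)` this is `δ ∫ g`, and summing over the blocks
gives `|∫_M^∞ F g| ≤ δ ∫_M^∞ g ≤ δ`.
-/

lemma abs_sub_le_integral_abs_deriv {g : ℝ → ℝ} (hg : ContDiff ℝ 1 g) {a b x y : ℝ}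
    (hx : x ∈ Icc a b) (hy : y ∈ Icc a b) :
    |g y - g x| ≤ ∫ t in a..b, |deriv g t| := by
  have hg' : Continuous (deriv g) := hg.continuous_deriv le_rfl
  wlog hxy : x ≤ y generalizing x y
  · rw [abs_sub_comm]; exact this hy hx (le_of_not_ge hxy)
  have hftc : g y - g x = ∫ t in x..y, deriv g t :=
    (intervalIntegral.integral_deriv_eq_sub
      (fun t _ => (hg.differentiable one_ne_zero).differentiableAt)
      (hg'.intervalIntegrable _ _)).symm
  calc |g y - g x| ≤ ∫ t in x..y, |deriv g t| := by
        rw [hftc]; exact intervalIntegral.abs_integral_le_integral_abs hxy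
    _ ≤ ∫ t in a..b, |deriv g t| :=
        intervalIntegral.integral_mono_interval hx.1 hxy hy.2
          (Eventually.of_forall fun t => abs_nonneg _) (hg'.abs.intervalIntegrable _ _)

lemma abs_integral_mul_le_of_abs_deriv_le {F g : ℝ → ℝ} {a b C ε η : ℝ} (hab : a ≤ b)
    (hF : IntervalIntegrable F volume a b) (hFC : ∀ x ∈ Icc a b, |F x| ≤ C)
    (hFavg : |∫ x in a..b, F x| ≤ η * (b - a))
    (hg : ContDiff ℝ 1 g) (hg0 : ∀ x ∈ Icc a b, 0 ≤ g x)
    (hgd : ∀ x ∈ Icc a b, |deriv g x| ≤ ε * g x) :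
    |∫ x in a..b, F x * g x| ≤ (η + C * ε * (b - a)) * ∫ x in a..b, g x := by
  rcases hab.eq_or_lt with rfl | hab
  · simp
  have hgc : Continuous g := hg.continuous
  have hη : 0 ≤ η := nonneg_of_mul_nonneg_left ((abs_nonneg _).trans hFavg) (by linarith)
  obtain ⟨m, hm, hmin⟩ := isCompact_Icc.exists_isMinOn (nonempty_Icc.mpr hab.le)
    hgc.continuousOn
  have hosc : ∀ x ∈ Icc a b, |g x - g m| ≤ ε * ∫ t in a..b, g t := fun x hx =>
    calc |g x - g m| ≤ ∫ t in a..b, |deriv g t| := abs_sub_le_integral_abs_deriv hg hm hx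
      _ ≤ ∫ t in a..b, ε * g t :=
          intervalIntegral.integral_mono_on hab.le
            ((hg.continuous_deriv le_rfl).abs.intervalIntegrable _ _)
            ((continuous_const.mul hgc).intervalIntegrable _ _) hgd
      _ = ε * ∫ t in a..b, g t := intervalIntegral.integral_const_mul _ _
  have hmin_le : g m * (b - a) ≤ ∫ t in a..b, g t := by
    simpa [mul_comm] using intervalIntegral.integral_mono_on hab.le
      (intervalIntegrable_const (μ := volume)) (hgc.intervalIntegrable a b) hmin
  have hsplit : ∫ x in a..b, F x * g x
      = (∫ x in a..b, F x * (g x - g m)) + (∫ x in a..b, F x) * g m := by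
    rw [← intervalIntegral.integral_mul_const, ← intervalIntegral.integral_add
      (hF.mul_continuousOn (g := fun x => g x - g m) (by fun_prop))
      (hF.mul_continuousOn (g := fun _ => g m) continuousOn_const)]
    congr 1 with x
    ring
  have hosc_part : |∫ x in a..b, F x * (g x - g m)| ≤ C * (ε * ∫ t in a..b, g t) * (b - a) := by
    have := intervalIntegral.norm_integral_le_of_norm_le_const
      (f := fun x => F x * (g x - g m)) (C := C * (ε * ∫ t in a..b, g t)) fun x hx => by
        rw [uIoc_of_le hab.le] at hx
        rw [Real.norm_eq_abs, abs_mul]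
        exact mul_le_mul (hFC x (Ioc_subset_Icc_self hx)) (hosc x (Ioc_subset_Icc_self hx))
          (abs_nonneg _) ((abs_nonneg _).trans (hFC a (left_mem_Icc.mpr hab.le)))
    simpa [Real.norm_eq_abs, abs_of_pos (sub_pos.mpr hab)] using this
  have hmean_part : |(∫ x in a..b, F x) * g m| ≤ η * ∫ t in a..b, g t := by
    rw [abs_mul, abs_of_nonneg (hg0 m hm)]
    calc |∫ x in a..b, F x| * g m ≤ η * (b - a) * g m := by gcongr; exact hg0 m hm
      _ = η * (g m * (b - a)) := by ring
      _ ≤ η * ∫ t in a..b, g t := by gcongr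
  calc |∫ x in a..b, F x * g x|
      ≤ C * (ε * ∫ t in a..b, g t) * (b - a) + η * ∫ t in a..b, g t := by
        rw [hsplit]; exact (abs_add_le _ _).trans (add_le_add hosc_part hmean_part)
    _ = (η + C * ε * (b - a)) * ∫ x in a..b, g x := by ring

lemma abs_integral_Ioi_le_of_forall_abs_intervalIntegral_le {φ ψ : ℝ → ℝ} {M r c : ℝ}
    (hr : 0 < r) (hφ : IntegrableOn φ (Ioi M)) (hψ : IntegrableOn ψ (Ioi M))
    (hblock : ∀ a, M ≤ a → |∫ x in a..a + r, φ x| ≤ c * ∫ x in a..a + r, ψ x) :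
    |∫ x in Ioi M, φ x| ≤ c * ∫ x in Ioi M, ψ x := by
  set t : ℕ → ℝ := fun k => M + k * r
  have ht_succ (k : ℕ) : t (k + 1) = t k + r := by simp only [t]; push_cast; ring
  have ht_ge (k : ℕ) : M ≤ t k := le_add_of_nonneg_right (by positivity)
  have hint {f : ℝ → ℝ} (hf : IntegrableOn f (Ioi M)) (k : ℕ) :
      IntervalIntegrable f volume (t k) (t (k + 1)) := by
    rw [ht_succ, intervalIntegrable_iff_integrableOn_Ioc_of_le (by linarith)]
    exact hf.mono_set fun x hx => (ht_ge k).trans_lt hx.1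
  have hsum {f : ℝ → ℝ} (hf : IntegrableOn f (Ioi M)) (n : ℕ) :
      ∫ x in M..t n, f x = ∑ k ∈ Finset.range n, ∫ x in t k..t k + r, f x := by
    simp_rw [← ht_succ]
    rw [intervalIntegral.sum_integral_adjacent_intervals fun k _ => hint hf k]
    simp [t]
  have hpartial (n : ℕ) : |∫ x in M..t n, φ x| ≤ c * ∫ x in M..t n, ψ x := by
    rw [hsum hφ, hsum hψ, Finset.mul_sum]
    exact (Finset.abs_sum_le_sum_abs _ _).trans
      (Finset.sum_le_sum fun k _ => hblock (t k) (ht_ge k))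
  have ht : Tendsto t atTop atTop :=
    tendsto_atTop_add_const_left _ _ (tendsto_natCast_atTop_atTop.atTop_mul_const hr)
  exact le_of_tendsto_of_tendsto' (intervalIntegral_tendsto_integral_Ioi M hφ ht).abs
    ((intervalIntegral_tendsto_integral_Ioi M hψ ht).const_mul c) hpartial

lemma abs_integral_Ioi_mul_le_of_abs_deriv_le {F g : ℝ → ℝ} {M r C ε η : ℝ} (hr : 0 < r)
    (hFm : Measurable F) (hFC : ∀ x, |F x| ≤ C)
    (hFavg : ∀ a, M ≤ a → |∫ x in a..a + r, F x| ≤ η * r)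
    (hg : ContDiff ℝ 1 g) (hg0 : ∀ x, M ≤ x → 0 ≤ g x)
    (hgd : ∀ x, M ≤ x → |deriv g x| ≤ ε * g x) (hgi : IntegrableOn g (Ioi M)) :
    |∫ x in Ioi M, F x * g x| ≤ (η + C * ε * r) * ∫ x in Ioi M, g x := by
  have hFi (a b : ℝ) : IntervalIntegrable F volume a b :=
    (intervalIntegrable_const (c := C)).mono_fun hFm.aestronglyMeasurable
      (ae_of_all _ fun x => (hFC x).trans (le_abs_self C))
  refine abs_integral_Ioi_le_of_forall_abs_intervalIntegral_le hr
    (hgi.bdd_mul hFm.aestronglyMeasurable (ae_of_all _ fun x => (hFC x :))) hgi fun a ha => ?_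
  have := abs_integral_mul_le_of_abs_deriv_le (le_add_of_nonneg_right hr.le) (hFi a (a + r))
    (fun x _ => hFC x) (by simpa using hFavg a ha) hg (fun x hx => hg0 x (ha.trans hx.1))
    (fun x hx => hgd x (ha.trans hx.1))
  simpa using this

/-- let `F ∈ L^∞(ℝ₊)` have uniform infinite-volume average `0`
(w.r.t. Lebesgue measure). For each `δ > 0` there is `ε > 0` such that for
every `C¹` density `g > 0` on `ℝ₊` with total integral `1` and
`|g'(x)|/g(x) ≤ ε` for `x ≥ M`, one has `|∫_M^∞ F g dx| ≤ δ`. -/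
theorem stmt_14 (F : ℝ → ℝ) (hFm : Measurable F)
    (hFb : ∃ C : ℝ, ∀ x : ℝ, |F x| ≤ C)
    (havg : ∀ ε' : ℝ, 0 < ε' → ∃ r : ℝ, 0 < r ∧ ∀ a : ℝ, 0 ≤ a →
      |(1 / r) * ∫ x in a..(a + r), F x| ≤ ε') :
    ∀ δ : ℝ, 0 < δ → ∃ ε : ℝ, 0 < ε ∧
      ∀ (g : ℝ → ℝ) (M : ℝ), 0 ≤ M → ContDiff ℝ 1 g →
        (∀ x : ℝ, 0 ≤ x → 0 < g x) →
        (∫ x in Set.Ici (0:ℝ), g x) = 1 →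
        (∀ x : ℝ, M ≤ x → |deriv g x| / g x ≤ ε) →
        |∫ x in Set.Ici M, F x * g x| ≤ δ := by
  obtain ⟨C₀, hC₀⟩ := hFb
  set C := max C₀ 1
  have hC : 0 < C := zero_lt_one.trans_le (le_max_right _ _)
  have hFC (x : ℝ) : |F x| ≤ C := (hC₀ x).trans (le_max_left _ _)
  intro δ hδ
  obtain ⟨r, hr, hravg⟩ := havg (δ / 2) (by positivity)
  have hmean (a : ℝ) (ha : 0 ≤ a) : |∫ x in a..a + r, F x| ≤ δ / 2 * r := by
    have := hravg a ha
    rwa [abs_mul, abs_of_pos (one_div_pos.mpr hr), one_div, inv_mul_le_iff₀ hr, mul_comm] at this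
  refine ⟨δ / (2 * C * r), by positivity, fun g M hM hg hgpos hgint hgd => ?_⟩
  have hg0 : IntegrableOn g (Ici 0) := Integrable.of_integral_ne_zero (hgint ▸ one_ne_zero)
  have hMsub : Ioi M ⊆ Ici 0 := Ioi_subset_Ici_self.trans (Ici_subset_Ici.mpr hM)
  have hmass : ∫ x in Ioi M, g x ≤ 1 := hgint ▸ setIntegral_mono_set hg0
    ((ae_restrict_iff' measurableSet_Ici).mpr (ae_of_all _ fun x hx => (hgpos x hx).le))
    hMsub.eventuallyLE
  have hbound := abs_integral_Ioi_mul_le_of_abs_deriv_le hr hFm hFC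
    (fun a ha => hmean a (hM.trans ha)) hg
    (fun x hx => (hgpos x (hM.trans hx)).le)
    (fun x hx => (div_le_iff₀ (hgpos x (hM.trans hx))).mp (hgd x hx)) (hg0.mono_set hMsub)
  have hδ_split : δ / 2 + C * (δ / (2 * C * r)) * r = δ := by field_simp; ring
  rw [integral_Ici_eq_integral_Ioi]
  calc |∫ x in Ioi M, F x * g x| ≤ δ * ∫ x in Ioi M, g x := hδ_split ▸ hbound
    _ ≤ δ := mul_le_of_le_one_right hδ.le hmass
end
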